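/- arXiv:1209.2546 — 3 statements merged into one kernel-verified Lean document; each statement's English description precedes it below -/
import Mathlib

section
/- For all nonnegative integers i and j, the integral ∫₀¹ x^i (1-x)^j log(x) dx multiplied by Γ(i+j+2)/(Γ(i+1)Γ(j+1)) equals H(i) - H(i+j+1), where H(n) = ∑_{k=1}^n 1/k is the n-th harmonic number (H(0)=0). -/
/-- The `n`-th harmonic number. -/
noncomputable def H (n : ℕ) : ℝ := ∑ k ∈ Finset.range n, (1 : ℝ) / (k + 1)

/-!
Write `I i j = ∫₀¹ xⁱ (1 - x)ʲ log x dx`. For `j = 0` an explicit antiderivative gives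
`I i 0 = -1 / (i + 1)²`, and splitting `(1 - x)ʲ⁺¹ = (1 - x)ʲ - x (1 - x)ʲ` gives the recursion
`I i (j + 1) = I i j - I (i + 1) j`. Induction on `j` then yields
`(i + j + 1)! I i j = i! j! (H i - H (i + j + 1))`, and `Γ (n + 1) = n!` turns this into the theorem.
-/

open Real intervalIntegral
open scoped Nat

lemma H_succ (n : ℕ) : H (n + 1) = H n + 1 / ((n : ℝ) + 1) := by
  simp [H, Finset.sum_range_succ]

lemma intervalIntegrable_pow_mul_one_sub_pow_mul_log (i j : ℕ) :
    IntervalIntegrable (fun x : ℝ => x ^ i * (1 - x) ^ j * log x) MeasureTheory.volume 0 1 :=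
  intervalIntegrable_log'.continuousOn_mul (by fun_prop)

lemma continuous_pow_succ_mul_log (n : ℕ) : Continuous fun x : ℝ => x ^ (n + 1) * log x :=
  (continuous_mul_log.mul (continuous_pow n)).congr fun x => by simp only [Pi.mul_apply]; ring

lemma integral_pow_mul_log (n : ℕ) :
    ∫ x in (0:ℝ)..1, x ^ n * log x = -1 / ((n : ℝ) + 1) ^ 2 := by
  let F : ℝ → ℝ := fun x => x ^ (n + 1) * log x / (n + 1) - x ^ (n + 1) / (n + 1) ^ 2
  have hF : Continuous F :=
    ((continuous_pow_succ_mul_log n).div_const _).sub ((continuous_pow _).div_const _)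
  have hF' : ∀ x ∈ Set.Ioo (0:ℝ) 1, HasDerivAt F (x ^ n * log x) x := by
    intro x hx
    have := (((hasDerivAt_pow (n + 1) x).mul (hasDerivAt_log hx.1.ne')).div_const ((n : ℝ) + 1)).sub
      ((hasDerivAt_pow (n + 1) x).div_const (((n : ℝ) + 1) ^ 2))
    refine this.congr_deriv ?_
    rw [Nat.add_sub_cancel, Nat.cast_succ, pow_succ]
    field_simp [hx.1.ne']
    ring
  rw [integral_eq_sub_of_hasDerivAt_of_le zero_le_one hF.continuousOn hF'
    (by simpa using intervalIntegrable_pow_mul_one_sub_pow_mul_log n 0)]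
  simp only [F, one_pow, log_one, log_zero, mul_zero, zero_div, zero_pow n.succ_ne_zero]
  ring

lemma integral_pow_mul_one_sub_pow_succ_mul_log (i j : ℕ) :
    ∫ x in (0:ℝ)..1, x ^ i * (1 - x) ^ (j + 1) * log x =
      (∫ x in (0:ℝ)..1, x ^ i * (1 - x) ^ j * log x) -
        ∫ x in (0:ℝ)..1, x ^ (i + 1) * (1 - x) ^ j * log x := by
  rw [← integral_sub (intervalIntegrable_pow_mul_one_sub_pow_mul_log i j)
    (intervalIntegrable_pow_mul_one_sub_pow_mul_log (i + 1) j)]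
  congr 1 with x
  ring

lemma integral_pow_mul_one_sub_pow_mul_log_mul_factorial (i j : ℕ) :
    (∫ x in (0:ℝ)..1, x ^ i * (1 - x) ^ j * log x) * (i + j + 1)! =
      i ! * j ! * (H i - H (i + j + 1)) := by
  induction j generalizing i with
  | zero =>
    simp only [pow_zero, mul_one, add_zero, integral_pow_mul_log, H_succ, Nat.factorial_succ]
    push_cast
    field_simp
    ring
  | succ j ih =>
    have hi₁ := ih (i + 1)
    rw [show i + 1 + j + 1 = i + j + 1 + 1 by ring, H_succ i, H_succ (i + j + 1),
      Nat.factorial_succ (i + j + 1), Nat.factorial_succ i] at hi₁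
    rw [integral_pow_mul_one_sub_pow_succ_mul_log, show i + (j + 1) + 1 = i + j + 1 + 1 by ring,
      H_succ (i + j + 1), Nat.factorial_succ (i + j + 1), Nat.factorial_succ j]
    have hi := ih i
    push_cast at hi hi₁ ⊢
    linear_combination (norm := (field_simp; ring)) ((i : ℝ) + j + 1 + 1) * hi - hi₁

theorem stmt_0 (i j : ℕ) :
    Real.Gamma ((i : ℝ) + (j : ℝ) + 2) / (Real.Gamma ((i : ℝ) + 1) * Real.Gamma ((j : ℝ) + 1)) *
      ∫ x in (0:ℝ)..1, x ^ i * (1 - x) ^ j * Real.log x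
    = H i - H (i + j + 1) := by
  have hΓ : Real.Gamma ((i : ℝ) + (j : ℝ) + 2) = (i + j + 1)! := by
    rw [← Real.Gamma_nat_eq_factorial]
    push_cast
    ring_nf
  rw [hΓ, Real.Gamma_nat_eq_factorial, Real.Gamma_nat_eq_factorial, div_mul_eq_mul_div,
    mul_comm, integral_pow_mul_one_sub_pow_mul_log_mul_factorial]
  field_simp
end

section
/- For any finite binary tree x with n = #x nodes, the Wiener index WI(x) := (1/2) ∑_{(u,v) ∈ x×x} d(u,v), where d is the canonical graph distance d(u,v) = |u| + |v| − 2|u∧v|, satisfies WI(x) = n·IPL(x) + n² − ∑_{u ∈ x} σ(x,u)². -/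
/-- Longest common prefix of two 0-1 sequences. -/
def lcp : List Bool → List Bool → List Bool
  | a :: as, b :: bs => if a = b then a :: lcp as bs else []
  | _, _ => []

/-- `subtreeSize x u` is the number of nodes of `x` having `u` as a prefix. -/
def subtreeSize (x : Finset (List Bool)) (u : List Bool) : ℕ :=
  (x.filter fun v => u <+: v).card

/-- Internal path length: sum of the depths of the nodes. -/
def IPL (x : Finset (List Bool)) : ℕ := ∑ u ∈ x, u.length

/-!
Since `x` is prefix-closed, the common prefixes in `x` of two nodes `u, v` are exactly the
`|u ∧ v| + 1` prefixes of `u ∧ v`. Counting the triples `(u, v, w)` with `w` a common prefix of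
`u` and `v` in two ways therefore gives `∑_{u,v} (|u ∧ v| + 1) = ∑_w σ(x,w)²`, while the depth
terms of `d(u,v)` contribute `2n · IPL(x)`.
-/

open Finset

theorem prefix_lcp_iff {w : List Bool} : ∀ {u v : List Bool},
    w <+: lcp u v ↔ w <+: u ∧ w <+: v := by
  induction w with
  | nil => simp
  | cons c w ih =>
    rintro (_ | ⟨a, u⟩) (_ | ⟨b, v⟩)
    · simp [lcp]
    · simp [lcp]
    · simp [lcp]
    · by_cases hab : a = b
      · subst hab
        simp only [lcp, if_true, List.cons_prefix_cons, ih]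
        tauto
      · simp only [lcp, hab, if_false, List.prefix_nil, reduceCtorEq, false_iff,
          List.cons_prefix_cons]
        rintro ⟨⟨rfl, -⟩, rfl, -⟩
        exact hab rfl

theorem lcp_prefix_left (u v : List Bool) : lcp u v <+: u :=
  (prefix_lcp_iff.mp (List.prefix_refl _)).1

theorem card_filter_prefix {α : Type*} [DecidableEq α] (s : Finset (List α)) (l : List α)
    (hs : ∀ w, w <+: l → w ∈ s) : #{w ∈ s | w <+: l} = l.length + 1 := by
  rw [← card_range (l.length + 1)]
  refine card_nbij' List.length l.take (fun w hw => ?_) (fun k hk => ?_) (fun w hw => ?_)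
    (fun k hk => ?_)
  · simpa [Nat.lt_succ_iff] using (mem_filter.mp hw).2.length_le
  · exact mem_filter.mpr ⟨hs _ (List.take_prefix k l), List.take_prefix k l⟩
  · exact (List.prefix_iff_eq_take.mp (mem_filter.mp hw).2).symm
  · exact List.length_take_of_le (by simpa [Nat.lt_succ_iff] using hk)

theorem sum_sum_card_filter_and {α β : Type*} (s : Finset α) (t : Finset β) (r : α → β → Prop)
    [∀ a b, Decidable (r a b)] :
    ∑ u ∈ t, ∑ v ∈ t, #{w ∈ s | r w u ∧ r w v} = ∑ w ∈ s, #{u ∈ t | r w u} ^ 2 := by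
  simp only [card_filter, sq, sum_mul_sum, ite_zero_mul_ite_zero, mul_one]
  exact (sum_congr rfl fun _ _ => sum_comm).trans sum_comm

theorem sum_sum_length_lcp_add_card_sq (x : Finset (List Bool))
    (hprefix : ∀ u ∈ x, ∀ v : List Bool, v <+: u → v ∈ x) :
    ∑ u ∈ x, ∑ v ∈ x, (lcp u v).length + #x ^ 2 = ∑ w ∈ x, subtreeSize x w ^ 2 := by
  have hlcp : ∀ u ∈ x, ∀ v ∈ x, (lcp u v).length + 1 = #{w ∈ x | w <+: u ∧ w <+: v} := by
    intro u hu v _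
    rw [← card_filter_prefix x _ fun w hw => hprefix u hu w (hw.trans (lcp_prefix_left u v))]
    simp only [prefix_lcp_iff]
  calc ∑ u ∈ x, ∑ v ∈ x, (lcp u v).length + #x ^ 2
      = ∑ u ∈ x, ∑ v ∈ x, ((lcp u v).length + 1) := by simp [sum_add_distrib, sq]
    _ = ∑ u ∈ x, ∑ v ∈ x, #{w ∈ x | w <+: u ∧ w <+: v} :=
        sum_congr rfl fun u hu => sum_congr rfl (hlcp u hu)
    _ = ∑ w ∈ x, subtreeSize x w ^ 2 := sum_sum_card_filter_and x x (· <+: ·)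

theorem stmt_5 (x : Finset (List Bool))
    (hprefix : ∀ u ∈ x, ∀ v : List Bool, v <+: u → v ∈ x) :
    (1 / 2 : ℝ) * ∑ u ∈ x, ∑ v ∈ x,
        ((u.length : ℝ) + (v.length : ℝ) - 2 * ((lcp u v).length : ℝ))
      = (x.card : ℝ) * (IPL x : ℝ) + (x.card : ℝ) ^ 2
        - ∑ u ∈ x, (subtreeSize x u : ℝ) ^ 2 := by
  have hσ : (∑ u ∈ x, ∑ v ∈ x, ((lcp u v).length : ℝ)) + (#x : ℝ) ^ 2
      = ∑ w ∈ x, (subtreeSize x w : ℝ) ^ 2 := by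
    exact_mod_cast sum_sum_length_lcp_add_card_sq x hprefix
  have hdepth : ∑ u ∈ x, ∑ v ∈ x, ((u.length : ℝ) + v.length) = 2 * (#x * IPL x) := by
    simp [sum_add_distrib, IPL, mul_sum, two_mul]
  rw [← hσ]
  simp only [sum_sub_distrib, ← mul_sum, hdepth]
  ring
end

section
/- The function d_𝕍 on the set 𝕍 of finite 0–1 sequences defined by d_𝕍(u,v) := 2^{−|u∧v|} − (2^{−|u|} + 2^{−|v|})/2 is a metric on 𝕍, and it induces the discrete topology on 𝕍. -/
/-- The metric `d_𝕍` on the set of finite 0-1 sequences. -/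
noncomputable def dV (u v : List Bool) : ℝ :=
  2 ^ (-((lcp u v).length : ℤ)) - (2 ^ (-(u.length : ℤ)) + 2 ^ (-(v.length : ℤ))) / 2

/-!
Write `ℓ(u, v)` for the length of `u ∧ v`. Since `2 ^ (-n)` is antitone and `ℓ(u, v) ≤ |u|, |v|`,
`d_𝕍(u, v)` is the mean of the nonnegative gaps `2^{-ℓ(u,v)} - 2^{-|u|}` and `2^{-ℓ(u,v)} - 2^{-|v|}`,
which both vanish only when `u ∧ v = u = v`. The triangle inequality reduces to
`2^{-ℓ(u,w)} + 2^{-|v|} ≤ 2^{-ℓ(u,v)} + 2^{-ℓ(v,w)}`, which follows from the ultrametric inequality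
`min (ℓ(u,v)) (ℓ(v,w)) ≤ ℓ(u,w)` together with `max (ℓ(u,v)) (ℓ(v,w)) ≤ |v|`.
For `u ≠ v` one of `|u|, |v|` exceeds `ℓ(u, v)`, which forces `d_𝕍(u, v) ≥ 2^{-ℓ(u,v)}/4 ≥ 2^{-|u|}/4`;
so every point is isolated.
-/

section lcp

@[simp]
lemma lcp_nil_left (v : List Bool) : lcp [] v = [] := by cases v <;> rfl

@[simp]
lemma lcp_nil_right (u : List Bool) : lcp u [] = [] := by cases u <;> rfl

lemma lcp_cons_cons (a b : Bool) (as bs : List Bool) :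
    lcp (a :: as) (b :: bs) = if a = b then a :: lcp as bs else [] := rfl

lemma lcp_comm : ∀ u v : List Bool, lcp u v = lcp v u
  | [], v => by simp
  | _ :: _, [] => by simp
  | a :: as, b :: bs => by
    by_cases h : a = b
    · subst h; simp [lcp_cons_cons, lcp_comm as bs]
    · simp [lcp_cons_cons, h, Ne.symm h]

@[simp]
lemma lcp_self : ∀ u : List Bool, lcp u u = u
  | [] => rfl
  | a :: as => by simp [lcp_cons_cons, lcp_self as]

lemma lcp_isPrefix_left : ∀ u v : List Bool, lcp u v <+: u
  | [], v => by simp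
  | _ :: _, [] => by simp
  | a :: as, b :: bs => by
    by_cases h : a = b
    · simpa [lcp_cons_cons, h] using lcp_isPrefix_left as bs
    · simp [lcp_cons_cons, h]

lemma lcp_isPrefix_right (u v : List Bool) : lcp u v <+: v :=
  lcp_comm u v ▸ lcp_isPrefix_left v u

lemma length_lcp_le_left (u v : List Bool) : (lcp u v).length ≤ u.length :=
  (lcp_isPrefix_left u v).length_le

lemma length_lcp_le_right (u v : List Bool) : (lcp u v).length ≤ v.length :=
  (lcp_isPrefix_right u v).length_le

lemma eq_of_length_lcp_eq {u v : List Bool} (hu : (lcp u v).length = u.length)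
    (hv : (lcp u v).length = v.length) : u = v :=
  ((lcp_isPrefix_left u v).eq_of_length hu).symm.trans ((lcp_isPrefix_right u v).eq_of_length hv)

lemma min_length_lcp_le : ∀ u v w : List Bool,
    min (lcp u v).length (lcp v w).length ≤ (lcp u w).length
  | [], _, _ => by simp
  | _, _, [] => by simp
  | _ :: _, [], _ :: _ => by simp
  | a :: as, b :: bs, c :: cs => by
    by_cases hab : a = b
    · by_cases hbc : b = c
      · subst hab hbc
        simpa [lcp_cons_cons] using min_length_lcp_le as bs cs
      · simp [lcp_cons_cons, hbc]
    · simp [lcp_cons_cons, hab]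

end lcp

section dV

lemma two_zpow_neg_antitone : Antitone fun n : ℕ => (2 : ℝ) ^ (-(n : ℤ)) :=
  fun _ _ h => zpow_le_zpow_right₀ one_le_two (neg_le_neg (Int.ofNat_le.mpr h))

lemma two_zpow_neg_injective : Function.Injective fun n : ℕ => (2 : ℝ) ^ (-(n : ℤ)) :=
  fun _ _ h => by simpa using zpow_right_injective₀ two_pos (by norm_num) h

lemma two_zpow_neg_succ (n : ℕ) : (2 : ℝ) ^ (-((n + 1 : ℕ) : ℤ)) = 2 ^ (-(n : ℤ)) / 2 := by
  rw [Nat.cast_succ, neg_add, zpow_add₀ two_ne_zero]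
  simp [div_eq_mul_inv]

lemma two_zpow_neg_length_le_lcp_left (u v : List Bool) :
    (2 : ℝ) ^ (-(u.length : ℤ)) ≤ 2 ^ (-((lcp u v).length : ℤ)) :=
  two_zpow_neg_antitone (length_lcp_le_left u v)

lemma two_zpow_neg_length_le_lcp_right (u v : List Bool) :
    (2 : ℝ) ^ (-(v.length : ℤ)) ≤ 2 ^ (-((lcp u v).length : ℤ)) :=
  two_zpow_neg_antitone (length_lcp_le_right u v)

lemma dV_nonneg (u v : List Bool) : 0 ≤ dV u v := by
  have hu := two_zpow_neg_length_le_lcp_left u v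
  have hv := two_zpow_neg_length_le_lcp_right u v
  unfold dV
  linarith

lemma dV_eq_zero_iff (u v : List Bool) : dV u v = 0 ↔ u = v := by
  refine ⟨fun h => ?_, fun h => by simp [h, dV]⟩
  have hu := two_zpow_neg_length_le_lcp_left u v
  have hv := two_zpow_neg_length_le_lcp_right u v
  unfold dV at h
  exact eq_of_length_lcp_eq (two_zpow_neg_injective (by linarith))
    (two_zpow_neg_injective (by linarith))

lemma dV_comm (u v : List Bool) : dV u v = dV v u := by
  simp only [dV, lcp_comm u v]
  ring

lemma two_zpow_neg_lcp_add_le (u v w : List Bool) :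
    (2 : ℝ) ^ (-((lcp u w).length : ℤ)) + 2 ^ (-(v.length : ℤ)) ≤
      2 ^ (-((lcp u v).length : ℤ)) + 2 ^ (-((lcp v w).length : ℤ)) := by
  have hmin := min_length_lcp_le u v w
  rcases le_total (lcp u v).length (lcp v w).length with h | h
  · have huw := two_zpow_neg_antitone (show (lcp u v).length ≤ (lcp u w).length by omega)
    linarith [two_zpow_neg_length_le_lcp_left v w]
  · have huw := two_zpow_neg_antitone (show (lcp v w).length ≤ (lcp u w).length by omega)
    linarith [two_zpow_neg_length_le_lcp_right u v]

lemma dV_triangle (u v w : List Bool) : dV u w ≤ dV u v + dV v w := by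
  have := two_zpow_neg_lcp_add_le u v w
  unfold dV
  linarith

lemma two_zpow_neg_lcp_div_four_le_dV {u v : List Bool} (h : u ≠ v) :
    (2 : ℝ) ^ (-((lcp u v).length : ℤ)) / 4 ≤ dV u v := by
  set L := (lcp u v).length
  have hhalf := two_zpow_neg_succ L
  have hu := two_zpow_neg_length_le_lcp_left u v
  have hv := two_zpow_neg_length_le_lcp_right u v
  unfold dV
  rcases (length_lcp_le_left u v).lt_or_eq with hlt | heq
  · linarith [two_zpow_neg_antitone (Nat.succ_le_of_lt hlt)]
  · have hlt : L < v.length :=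
      (length_lcp_le_right u v).lt_of_ne fun hv' => h (eq_of_length_lcp_eq heq hv')
    linarith [two_zpow_neg_antitone (Nat.succ_le_of_lt hlt)]

lemma dV_isolated (u : List Bool) :
    ∃ ε : ℝ, 0 < ε ∧ ∀ v : List Bool, dV u v < ε → v = u := by
  refine ⟨2 ^ (-(u.length : ℤ)) / 4, by positivity, fun v hv => ?_⟩
  by_contra hne
  have := two_zpow_neg_lcp_div_four_le_dV (Ne.symm hne)
  linarith [two_zpow_neg_length_le_lcp_left u v]

end dV

theorem stmt_7 :
    (∀ u v : List Bool, 0 ≤ dV u v) ∧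
    (∀ u v : List Bool, dV u v = 0 ↔ u = v) ∧
    (∀ u v : List Bool, dV u v = dV v u) ∧
    (∀ u v w : List Bool, dV u w ≤ dV u v + dV v w) ∧
    -- the induced topology is discrete: every point is isolated
    (∀ u : List Bool, ∃ ε : ℝ, 0 < ε ∧ ∀ v : List Bool, dV u v < ε → v = u) :=
  ⟨dV_nonneg, dV_eq_zero_iff, dV_comm, dV_triangle, dV_isolated⟩
end
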